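/- arXiv:1908.01883 — 2 statements merged into one kernel-verified Lean document; each statement's English description precedes it below -/
import Mathlib

section
/- Suppose φ : [0, ∞) → ℝ is differentiable, φ(0) ≤ 0, λ < 0, and for every t with φ(t) ≥ 0 we have φ̇(t) ≤ λ·φ(t). Then φ(t) ≤ 0 for all t ≥ 0. -/
theorem stmt12 (φ : ℝ → ℝ) (hdiff : Differentiable ℝ φ) (lam : ℝ) (hlam : lam < 0)
    (hineq : ∀ t, 0 ≤ t → 0 ≤ φ t → deriv φ t ≤ lam * φ t) (h0 : φ 0 ≤ 0) :
    ∀ t, 0 ≤ t → φ t ≤ 0 := by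
  intro t ht
  have key : ∀ ε > (0:ℝ), φ t ≤ ε := by
    intro ε hε
    have := image_le_of_deriv_right_lt_deriv_boundary' (f := φ) (f' := deriv φ)
      (a := 0) (b := t) (B := fun _ => ε) (B' := fun _ => 0)
      (hdiff.continuous.continuousOn)
      (fun x _ => (hdiff x).hasDerivAt.hasDerivWithinAt)
      (h0.trans hε.le) continuousOn_const
      (fun x _ => (hasDerivWithinAt_const x _ ε))
      (fun x hx hfx => by
        have h1 : deriv φ x ≤ lam * ε := by
          have := hineq x hx.1 (by rw [hfx]; exact hε.le)
          rwa [hfx] at this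
        have h2 : lam * ε < 0 := mul_neg_of_neg_of_pos hlam hε
        simpa using h1.trans_lt h2)
    exact this (Set.right_mem_Icc.2 ht)
  by_contra h
  push_neg at h
  have := key (φ t / 2) (by linarith); linarith
end

section
/- Let d : [0,∞) → ℝ be twice differentiable with d(0) > d_min ≥ 0 and suppose φ(t) := d_min² - d(t)² - k·ḋ(t) ≤ 0 for all t, where k > 0. Then d(t) > 0 for all t; moreover if additionally d(t)² ≤ d_min² at some time t, then ḋ(t) ≥ 0, i.e., the distance cannot be decreasing while inside the margin. -/
/-!
Since `φ ≤ 0` and `d_min² ≥ 0`, the distance obeys the Riccati inequality `k ḋ ≥ -d²`. The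
function `c t = (1/d(0) + 2t/k)⁻¹` solves `k ċ = -2c²`, which is strictly below that bound, so `d`
can never cross `c` from above: `0 < c ≤ d` on `[0, ∞)`. Inside the margin `d² ≤ d_min²` the
inequality `k ḋ ≥ d_min² - d²` forces `ḋ ≥ 0`.
-/

lemma hasDerivAt_inv_add_mul {b c t : ℝ} (h : b + c * t ≠ 0) :
    HasDerivAt (fun s => (b + c * s)⁻¹) (-c * (b + c * t)⁻¹ ^ 2) t := by
  have hlin : HasDerivAt (fun s => b + c * s) c t := by
    simpa using ((hasDerivAt_id t).const_mul c).const_add b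
  exact (hlin.inv h).congr_deriv (by rw [inv_pow]; ring)

lemma le_of_neg_sq_le_mul_deriv {d : ℝ → ℝ} {k : ℝ} (hk : 0 < k) (hd : Differentiable ℝ d)
    (h0 : 0 < d 0) (hriccati : ∀ t, 0 ≤ t → -d t ^ 2 ≤ k * deriv d t) {t : ℝ} (ht : 0 ≤ t) :
    ((d 0)⁻¹ + 2 / k * t)⁻¹ ≤ d t := by
  have hbase : ∀ s, 0 ≤ s → 0 < (d 0)⁻¹ + 2 / k * s := fun s hs =>
    add_pos_of_pos_of_nonneg (inv_pos.mpr h0) (by positivity)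
  refine image_le_of_deriv_right_lt_deriv_boundary (a := 0) (b := t)
    (f' := fun s => -(2 / k) * ((d 0)⁻¹ + 2 / k * s)⁻¹ ^ 2)
    (fun s hs => (hasDerivAt_inv_add_mul (hbase s hs.1).ne').continuousAt.continuousWithinAt)
    (fun s hs => (hasDerivAt_inv_add_mul (hbase s hs.1).ne').hasDerivWithinAt)
    (by simp) (fun s => (hd s).hasDerivAt) (fun s hs hcs => ?_) ⟨ht, le_rfl⟩
  have hc : 0 < ((d 0)⁻¹ + 2 / k * s)⁻¹ := inv_pos.mpr (hbase s hs.1)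
  have hds := hriccati s hs.1
  rw [← hcs] at hds
  rw [neg_mul, div_mul_eq_mul_div, neg_lt, lt_div_iff₀ hk]
  nlinarith

lemma pos_of_neg_sq_le_mul_deriv {d : ℝ → ℝ} {k : ℝ} (hk : 0 < k) (hd : Differentiable ℝ d)
    (h0 : 0 < d 0) (hriccati : ∀ t, 0 ≤ t → -d t ^ 2 ≤ k * deriv d t) {t : ℝ} (ht : 0 ≤ t) :
    0 < d t :=
  lt_of_lt_of_le (inv_pos.mpr (add_pos_of_pos_of_nonneg (inv_pos.mpr h0) (by positivity)))
    (le_of_neg_sq_le_mul_deriv hk hd h0 hriccati ht)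

theorem stmt13_general (d : ℝ → ℝ) (hd : Differentiable ℝ d)
    (dmin k : ℝ) (hdmin : 0 ≤ dmin) (h0 : d 0 > dmin) (hk : 0 < k)
    (hφ : ∀ t, 0 ≤ t → dmin ^ 2 - (d t) ^ 2 - k * deriv d t ≤ 0) :
    (∀ t, 0 ≤ t → d t > 0) ∧
    (∀ t, 0 ≤ t → (d t) ^ 2 ≤ dmin ^ 2 → deriv d t ≥ 0) := by
  have hriccati : ∀ t, 0 ≤ t → -d t ^ 2 ≤ k * deriv d t := fun t ht => by
    linarith [hφ t ht, sq_nonneg dmin]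
  refine ⟨fun t ht => pos_of_neg_sq_le_mul_deriv hk hd (by linarith) hriccati ht,
    fun t ht hmargin => ?_⟩
  have hkd : 0 ≤ k * deriv d t := by linarith [hφ t ht]
  exact nonneg_of_mul_nonneg_right hkd hk

theorem stmt13 (d : ℝ → ℝ) (hd : Differentiable ℝ d) (hd2 : Differentiable ℝ (deriv d))
    (dmin k : ℝ) (hdmin : 0 ≤ dmin) (h0 : d 0 > dmin) (hk : 0 < k)
    (hφ : ∀ t, 0 ≤ t → dmin ^ 2 - (d t) ^ 2 - k * deriv d t ≤ 0) :
    (∀ t, 0 ≤ t → d t > 0) ∧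
    (∀ t, 0 ≤ t → (d t) ^ 2 ≤ dmin ^ 2 → deriv d t ≥ 0) :=
  stmt13_general d hd dmin k hdmin h0 hk hφ
end
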